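/- Let n, m ≥ 2 be natural numbers and let c ≥ 1 be a natural number such that for every prime p dividing c there exists a natural number k ≥ 1 with p^k ≥ 3, φ(p^k) ∣ n, and m ≤ p^k − 1. Then for every nonnegative integer b, the number of m-tuples (x_1,…,x_m) of nonnegative integers with x_1^n + ⋯ + x_m^n = b·c^n equals the number of m-tuples of nonnegative integers with x_1^n + ⋯ + x_m^n = b. -/

import Mathlib

/-!
Fix a prime `p ∣ c` and `q = p ^ k` with `φ(q) ∣ n` and `m < q`. Since `k ≤ φ(q) ≤ n`, Euler's
theorem makes `x ^ n` congruent to `0` or `1` modulo `q` according as `p` divides `x` or not, so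
if `p ^ n` divides `x₁ ^ n + ⋯ + x_m ^ n` then `q` divides the number of `xᵢ` prime to `p`. That
number is less than `q`, hence zero: all `xᵢ` are multiples of `p`, and `x ↦ p • x` is a
bijection from the representations of `d` onto those of `d * p ^ n`. Peeling off the prime
factors of `c` one at a time gives the theorem.
-/

open Finset
open scoped Nat

/-- The paper's `P_m^n(d)`, with the index type `ι` in place of `Fin m`. -/
noncomputable def powSumReps (ι : Type*) [Fintype ι] (n d : ℕ) : ℕ :=
  Nat.card {x : ι → ℕ // ∑ i, x i ^ n = d}

lemma Nat.Prime.le_totient_pow {p : ℕ} (hp : p.Prime) (k : ℕ) : k ≤ φ (p ^ k) := by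
  rcases Nat.eq_zero_or_pos k with rfl | hk
  · exact Nat.zero_le _
  rw [Nat.totient_prime_pow hp hk]
  have : k - 1 < p ^ (k - 1) := Nat.lt_pow_self hp.one_lt
  calc k ≤ p ^ (k - 1) := by omega
    _ ≤ p ^ (k - 1) * (p - 1) := Nat.le_mul_of_pos_right _ (Nat.sub_pos_of_lt hp.one_lt)

lemma Nat.Prime.natCast_pow_eq_ite {p k n : ℕ} (hp : p.Prime) (hkn : k ≤ n)
    (hφ : φ (p ^ k) ∣ n) (x : ℕ) :
    (x : ZMod (p ^ k)) ^ n = if p ∣ x then 0 else 1 := by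
  split_ifs with hx
  · rw [← Nat.cast_pow, ZMod.natCast_eq_zero_iff]
    exact (pow_dvd_pow_of_dvd hx k).trans (pow_dvd_pow x hkn)
  · have hcop : x.Coprime (p ^ k) := ((hp.coprime_iff_not_dvd.mpr hx).pow_left k).symm
    obtain ⟨e, rfl⟩ := hφ
    rw [← ZMod.coe_unitOfCoprime x hcop, ← Units.val_pow_eq_pow_val, pow_mul,
      ZMod.pow_totient, one_pow, Units.val_one]

theorem Nat.Prime.dvd_of_pow_dvd_sum_pow {ι : Type*} [Fintype ι] {p k n : ℕ} (hp : p.Prime)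
    (hn : n ≠ 0) (hφ : φ (p ^ k) ∣ n) (hι : Fintype.card ι < p ^ k) {x : ι → ℕ}
    (hx : p ^ n ∣ ∑ i, x i ^ n) (i : ι) : p ∣ x i := by
  classical
  have hkn : k ≤ n := (hp.le_totient_pow k).trans (Nat.le_of_dvd (Nat.pos_of_ne_zero hn) hφ)
  set S := univ.filter fun j => ¬p ∣ x j
  have hS : ((#S : ℕ) : ZMod (p ^ k)) = 0 :=
    calc ((#S : ℕ) : ZMod (p ^ k)) = ∑ j, (x j : ZMod (p ^ k)) ^ n := by
          simp only [hp.natCast_pow_eq_ite hkn hφ, sum_ite, sum_const_zero, sum_const,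
            nsmul_eq_mul, mul_one, zero_add, S]
      _ = ((∑ j, x j ^ n : ℕ) : ZMod (p ^ k)) := by push_cast; rfl
      _ = 0 := (ZMod.natCast_eq_zero_iff _ _).mpr ((pow_dvd_pow p hkn).trans hx)
  have hS0 : #S = 0 := Nat.eq_zero_of_dvd_of_lt ((ZMod.natCast_eq_zero_iff _ _).mp hS)
    ((card_filter_le _ _).trans_lt hι)
  by_contra hi
  exact (filter_eq_empty_iff.mp (Finset.card_eq_zero.mp hS0)) (mem_univ i) hi

section Scaling

variable {ι : Type*} [Fintype ι]

lemma sum_mul_pow {R : Type*} [CommSemiring R] (n : ℕ) (d : R) (y : ι → R) :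
    ∑ i, (d * y i) ^ n = d ^ n * ∑ i, y i ^ n := by
  simp only [mul_pow, mul_sum]

lemma powSumReps_mul_pow_of_forall_dvd {n d : ℕ} (hd : d ≠ 0) (t : ℕ)
    (h : ∀ x : ι → ℕ, ∑ i, x i ^ n = t * d ^ n → ∀ i, d ∣ x i) :
    powSumReps ι n (t * d ^ n) = powSumReps ι n t := by
  have hdiv (x : {x : ι → ℕ // ∑ i, x i ^ n = t * d ^ n}) (i : ι) : d * (x.1 i / d) = x.1 i :=
    Nat.mul_div_cancel' (h _ x.2 i)
  refine Nat.card_congr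
    { toFun := fun x => ⟨fun i => x.1 i / d, ?_⟩
      invFun := fun y => ⟨fun i => d * y.1 i, by rw [sum_mul_pow, y.2, mul_comm]⟩
      left_inv := fun x => Subtype.ext (funext (hdiv x))
      right_inv := fun y => Subtype.ext (funext fun i => Nat.mul_div_cancel_left _ hd.bot_lt) }
  have := x.2
  rw [← funext (hdiv x), sum_mul_pow, mul_comm] at this
  exact Nat.eq_of_mul_eq_mul_right (pow_pos hd.bot_lt n) this

lemma powSumReps_mul_prime_pow {p k n : ℕ} (hp : p.Prime) (hn : n ≠ 0) (hφ : φ (p ^ k) ∣ n)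
    (hι : Fintype.card ι < p ^ k) (b : ℕ) : powSumReps ι n (b * p ^ n) = powSumReps ι n b :=
  powSumReps_mul_pow_of_forall_dvd hp.ne_zero b fun _ hx =>
    hp.dvd_of_pow_dvd_sum_pow hn hφ hι (hx ▸ dvd_mul_left _ _)

end Scaling

theorem stmt_6_general (n m c : ℕ) (hn : 2 ≤ n) (hc : 1 ≤ c)
    (hφ : ∀ p : ℕ, p.Prime → p ∣ c →
      ∃ k : ℕ, 1 ≤ k ∧ 3 ≤ p ^ k ∧ Nat.totient (p ^ k) ∣ n ∧ m ≤ p ^ k - 1) :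
    ∀ b : ℕ,
      Nat.card {x : Fin m → ℕ // ∑ i, x i ^ n = b * c ^ n} =
      Nat.card {x : Fin m → ℕ // ∑ i, x i ^ n = b} := by
  show ∀ b, powSumReps (Fin m) n (b * c ^ n) = powSumReps (Fin m) n b
  induction c using Nat.recOnMul with
  | zero => omega
  | one => simp
  | prime p hp =>
    obtain ⟨k, -, hk3, hk, hkm⟩ := hφ p hp dvd_rfl
    exact powSumReps_mul_prime_pow hp (by omega) hk (by rw [Fintype.card_fin]; omega)
  | mul a c iha ihc =>
    intro b
    have ha : 1 ≤ a := Nat.pos_of_mul_pos_right hc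
    have hc' : 1 ≤ c := Nat.pos_of_mul_pos_left hc
    rw [mul_pow, ← mul_assoc, ihc hc' (fun p hp hpc => hφ p hp (dvd_mul_of_dvd_right hpc a)),
      iha ha (fun p hp hpa => hφ p hp (dvd_mul_of_dvd_left hpa c))]

/-- If `n, m ≥ 2` and `c ≥ 1` is such that every prime `p ∣ c` admits `k ≥ 1` with `p^k ≥ 3`,
`φ(p^k) ∣ n` and `m ≤ p^k - 1`, then for every `b` the number of `m`-tuples of nonnegative
integers with `∑ xᵢ^n = b·c^n` equals the number with `∑ xᵢ^n = b`. -/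
theorem stmt_6 (n m c : ℕ) (hn : 2 ≤ n) (hm : 2 ≤ m) (hc : 1 ≤ c)
    (hφ : ∀ p : ℕ, p.Prime → p ∣ c →
      ∃ k : ℕ, 1 ≤ k ∧ 3 ≤ p ^ k ∧ Nat.totient (p ^ k) ∣ n ∧ m ≤ p ^ k - 1) :
    ∀ b : ℕ,
      Nat.card {x : Fin m → ℕ // ∑ i, x i ^ n = b * c ^ n} =
      Nat.card {x : Fin m → ℕ // ∑ i, x i ^ n = b} :=
  stmt_6_general n m c hn hc hφ
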